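/- Let μ be a partition of d ≥ 1. Write P_μ(x1,x2) := E_μ((x1 x2)^{−1}, x1, x2) = Σ_{m=(m1,m2)∈ℤ²} b_m x1^{m1} x2^{m2} as a Laurent polynomial (only finitely many b_m are nonzero, and b_{(0,0)} = 0). Then, for every m ≠ (0,0) with b_m ≠ 0, the linear form −m1·(s+t) + m2·t is nonzero in ℚ(s,t), and in ℚ(s,t) one has Π_{m≠(0,0)} ( −m1·(s+t) + m2·t )^{−b_m} = (−1)^{d + n(μ)} · t^{−d} · Π_{□∈μ} h(□)^{−1}, where n(μ) = Σ_{□∈μ} l(□) is the sum of all leg lengths of μ. -/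

import Mathlib

/-! Laurent polynomials in `x1, x2` over `ℤ` are modeled as the group algebra
`ℤ[ℤ × ℤ]`; `Xm (m1, m2)` is the monomial `x1^m1 x2^m2`, and the field of rational
functions in `x1, x2` is the fraction field of this domain.  `FmuAt μ u v` is the
Laurent polynomial `F_μ` evaluated at the monomials `X^u, X^v` in place of `x1, x2`.
The rational-function field `ℚ(s,t)` is modeled as the fraction field of
`MvPolynomial (Fin 2) ℚ`, with `S` and `T` the images of the two variables. -/

noncomputable section

abbrev LaurentZ : Type := AddMonoidAlgebra ℤ (ℤ × ℤ)

instance : IsDomain LaurentZ := NoZeroDivisors.to_isDomain _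

abbrev RatFld : Type := FractionRing LaurentZ

def Xm (m : ℤ × ℤ) : LaurentZ := AddMonoidAlgebra.single m 1

def QmuAt (μ : YoungDiagram) (u v : ℤ × ℤ) : LaurentZ :=
  ∑ c ∈ μ.cells, Xm ((c.1 : ℤ) • u + (c.2 : ℤ) • v)

def FmuAt (μ : YoungDiagram) (u v : ℤ × ℤ) : LaurentZ :=
  - QmuAt μ u v - Xm (-u - v) * QmuAt μ (-u) (-v) +
    QmuAt μ u v * QmuAt μ (-u) (-v) * ((1 - Xm u) * (1 - Xm v) * Xm (-u - v))

def ι : LaurentZ →+* RatFld := algebraMap LaurentZ RatFld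

/-- The specialization `P_μ(x1,x2) = E_μ((x1 x2)⁻¹, x1, x2)` of the edge term, as a
rational function. -/
def Espec (μ : YoungDiagram) : RatFld :=
  (ι (FmuAt μ (1, 0) (0, 1)) - ι (Xm (-1, -1)) * ι (FmuAt μ (0, -1) (0, 1))) /
    (ι (Xm (-1, -1)) - 1)

/-- The rational function field `ℚ(s,t)`. -/
abbrev KST : Type := FractionRing (MvPolynomial (Fin 2) ℚ)

def S : KST := algebraMap (MvPolynomial (Fin 2) ℚ) KST (MvPolynomial.X 0)

def T : KST := algebraMap (MvPolynomial (Fin 2) ℚ) KST (MvPolynomial.X 1)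

/-- The linear form `−m1·(s+t) + m2·t ∈ ℚ(s,t)` attached to an exponent `m = (m1,m2)`. -/
def lf (m : ℤ × ℤ) : KST := -(m.1 : KST) * (S + T) + (m.2 : KST) * T

def armLen (μ : YoungDiagram) (c : ℕ × ℕ) : ℕ :=
  (μ.cells.filter (fun d => d.1 = c.1 ∧ c.2 < d.2)).card

def legLen (μ : YoungDiagram) (c : ℕ × ℕ) : ℕ :=
  (μ.cells.filter (fun d => d.2 = c.2 ∧ c.1 < d.1)).card

/-- The hook length `h(□) = a(□) + l(□) + 1`. -/
def hookLen (μ : YoungDiagram) (c : ℕ × ℕ) : ℕ := armLen μ c + legLen μ c + 1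

/-- `n(μ) = Σ_{□∈μ} l(□)`, the sum of all leg lengths. -/
def nOf (μ : YoungDiagram) : ℕ := ∑ c ∈ μ.cells, legLen μ c

open Finset
lemma Xm_add (a b : ℤ × ℤ) : Xm (a + b) = Xm a * Xm b := by
  simp [Xm, AddMonoidAlgebra.single_mul_single]

lemma Xm_zero : Xm 0 = 1 := rfl

lemma Xm_ne_zero (m : ℤ × ℤ) : Xm m ≠ 0 := by
  simp [Xm, AddMonoidAlgebra.single_eq_zero]

lemma Xm_mul_neg (m : ℤ × ℤ) : Xm m * Xm (-m) = 1 := by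
  rw [← Xm_add, add_neg_cancel]; exact Xm_zero

lemma Xm_nsmul (n : ℕ) (a : ℤ × ℤ) : Xm ((n : ℤ) • a) = Xm a ^ n := by
  induction n with
  | zero => simp [Xm_zero]
  | succ k ih => push_cast [add_smul, one_smul, Xm_add, ih, pow_succ]; ring

lemma iota_inj : Function.Injective ι := IsFractionRing.injective LaurentZ RatFld

lemma iota_Xm_ne_zero (m : ℤ × ℤ) : ι (Xm m) ≠ 0 := by
  intro h
  exact Xm_ne_zero m (iota_inj (h.trans (map_zero ι).symm))
lemma step_core {F : Type*} [CommRing F] (a1 b1 a2 b2 z w R R' q q' : F)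
    (h1 : a1*b1 = 1) (h2 : a2*b2 = 1) (hz : z*w = 1)
    (hgeo : (1-a2)*R = 1-z) (hRR : R = z*b2*R') :
    -(R+a1*q) - b1*b2*(R'+b1*q') + (R+a1*q)*(R'+b1*q')*((1-a1)*(1-a2)*(b1*b2))
    = (-q - b1*b2*q' + q*q'*((1-a1)*(1-a2)*(b1*b2)))
      - b1*z*b2*(R' - (1-b1)*q') - w*(R - (1-a1)*q) := by
  linear_combination
    (b2*R'*q - b2*R*R' - a2*b2*R'*q + a2*b2*R*R' + b1*b2*q*q' - b1*b2*R*q'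
      - b1*a2*b2*q*q' + b1*a2*b2*R*q' - a1*b2*R'*q + a1*a2*b2*R'*q
      - a1*b1*b2*q*q' + a1*b1*a2*b2*q*q')*h1
    + (-(R'*q) + R*R' + z*w*R'*q - b2*z*R'^2 + b1*R*q' - b1*R*R' - b1*b2*z*R'*q'
      + b1*b2*z*R'^2 - b1^2*R*q' + b1^2*b2*z*R'*q' + a1*R'*q - a1*z*w*R'*q)*h2
    + (-q + R'*q + b2*R' - b2*R'*q + a1*q - a1*R'*q + a1*b2*R'*q)*hz
    + (w*q - b2*R' - b1*b2*q' + b1*b2*R' + b1^2*b2*q' - a1*w*q)*hgeo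
    + (-1 + R' + w - w*q + a2*w*q - a2*b2*R' + b1*q' - b1*R' - b1*a2*b2*q'
      + b1*a2*b2*R' - b1^2*q' + b1^2*a2*b2*q' + a1*w*q - a1*a2*w*q)*hRR
/-- The diagram obtained by deleting the top row. -/
def tailYD (μ : YoungDiagram) : YoungDiagram where
  cells := (μ.cells.filter (fun c => 1 ≤ c.1)).image (fun c => (c.1 - 1, c.2))
  isLowerSet := by
    rintro ⟨i1, j1⟩ ⟨i2, j2⟩ ⟨hi, hj⟩ h
    simp only [Finset.coe_image, Finset.coe_filter, Set.mem_image, Set.mem_setOf_eq,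
      YoungDiagram.mem_cells] at h ⊢
    obtain ⟨⟨a, b⟩, ⟨hab, ha⟩, heq⟩ := h
    simp only [Prod.mk.injEq] at heq
    simp only [Prod.mk_le_mk] at hi hj
    refine ⟨(i2 + 1, j2), ⟨?_, by omega⟩, by simp⟩
    exact μ.up_left_mem (by omega) (by omega) hab

lemma mem_tailYD {μ : YoungDiagram} {i j : ℕ} : (i, j) ∈ tailYD μ ↔ (i + 1, j) ∈ μ := by
  constructor
  · intro h
    rw [← YoungDiagram.mem_cells] at h
    simp only [tailYD, YoungDiagram.mem_mk, Finset.mem_image, Finset.mem_filter,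
      YoungDiagram.mem_cells, Prod.mk.injEq] at h
    obtain ⟨⟨a, b⟩, ⟨hab, ha⟩, h1, h2⟩ := h
    have : (a, b) = (i + 1, j) := by simp at ha ⊢; omega
    rwa [this] at hab
  · intro h
    rw [← YoungDiagram.mem_cells]
    simp only [tailYD, YoungDiagram.mem_mk, Finset.mem_image, Finset.mem_filter,
      YoungDiagram.mem_cells, Prod.mk.injEq]
    exact ⟨(i + 1, j), ⟨h, by omega⟩, by omega, rfl⟩

lemma mem_tailYD' {μ : YoungDiagram} {c : ℕ × ℕ} : c ∈ tailYD μ ↔ (c.1 + 1, c.2) ∈ μ := by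
  obtain ⟨i, j⟩ := c; exact mem_tailYD

lemma tailYD_card_lt {μ : YoungDiagram} (h : μ ≠ ⊥) :
    (tailYD μ).cells.card < μ.cells.card := by
  have h0 : (0, 0) ∈ μ := by
    by_contra h00
    apply h
    ext ⟨i, j⟩
    simp only [YoungDiagram.cells_bot, Finset.notMem_empty, iff_false, ← YoungDiagram.mem_cells]
    intro hij
    exact h00 (μ.up_left_mem (Nat.zero_le _) (Nat.zero_le _) hij)
  have hsub : (tailYD μ).cells.image (fun c => (c.1 + 1, c.2)) ⊆ μ.cells.erase (0, 0) := by
    intro c hc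
    simp only [Finset.mem_image] at hc
    obtain ⟨⟨a, b⟩, ha, rfl⟩ := hc
    rw [YoungDiagram.mem_cells, mem_tailYD] at ha
    simp only [Finset.mem_erase, YoungDiagram.mem_cells]
    exact ⟨by simp, ha⟩
  calc (tailYD μ).cells.card
      = ((tailYD μ).cells.image (fun c => (c.1 + 1, c.2))).card := by
        rw [Finset.card_image_of_injective]
        intro x y hxy; simp only [Prod.mk.injEq] at hxy; exact Prod.ext (by omega) hxy.2
    _ ≤ (μ.cells.erase (0, 0)).card := Finset.card_le_card hsub
    _ < μ.cells.card := Finset.card_erase_lt_of_mem (by simpa using h0)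

/-- Row decomposition of a sum over cells. -/
lemma sum_cells_decomp {M : Type*} [AddCommMonoid M] (μ : YoungDiagram) (f : ℕ × ℕ → M) :
    ∑ c ∈ μ.cells, f c =
      (∑ j ∈ Finset.range (μ.rowLen 0), f (0, j)) +
        ∑ c ∈ (tailYD μ).cells, f (c.1 + 1, c.2) := by
  have hsplit : μ.cells =
      ((Finset.range (μ.rowLen 0)).image fun j => ((0 : ℕ), j)) ∪
        ((tailYD μ).cells.image fun c => (c.1 + 1, c.2)) := by
    ext ⟨i, j⟩
    simp only [Finset.mem_union, Finset.mem_image, Finset.mem_range, YoungDiagram.mem_cells,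
      Prod.mk.injEq]
    constructor
    · intro hij
      rcases Nat.eq_zero_or_pos i with hi | hi
      · subst hi
        exact Or.inl ⟨j, (YoungDiagram.mem_iff_lt_rowLen).mp hij, rfl, rfl⟩
      · refine Or.inr ⟨(i - 1, j), ?_, by omega, rfl⟩
        have h' : i - 1 + 1 = i := by omega
        exact mem_tailYD.mpr (by rwa [h'])
    · rintro (⟨k, hk, rfl, rfl⟩ | ⟨⟨a, b⟩, ha, h1, h2⟩)
      · exact (YoungDiagram.mem_iff_lt_rowLen).mpr hk
      · have ha' := mem_tailYD'.mp ha
        simp only at h1 h2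
        subst h2
        rw [h1] at ha'
        exact ha'
  rw [hsplit, Finset.sum_union, Finset.sum_image (by simp), Finset.sum_image
    (by intro x _ y _ hxy; simp only [Prod.mk.injEq] at hxy; exact Prod.ext (by omega) hxy.2)]
  · rw [Finset.disjoint_left]
    rintro ⟨i, j⟩ hij hij'
    simp only [Finset.mem_image, Finset.mem_range, Prod.mk.injEq] at hij hij'
    obtain ⟨k, _, h1, _⟩ := hij
    obtain ⟨c, _, h2, _⟩ := hij'
    omega
lemma rowLen_tailYD_le (μ : YoungDiagram) : (tailYD μ).rowLen 0 ≤ μ.rowLen 0 := by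
  by_contra h
  push_neg at h
  have h1 : ((0 : ℕ), μ.rowLen 0) ∈ tailYD μ := YoungDiagram.mem_iff_lt_rowLen.mpr h
  have h2 : (1, μ.rowLen 0) ∈ μ := mem_tailYD.mp h1
  have h3 : (0, μ.rowLen 0) ∈ μ := μ.up_left_mem (by omega) le_rfl h2
  rw [YoungDiagram.mem_iff_lt_rowLen] at h3
  omega

lemma sum_cells_cols {M : Type*} [AddCommMonoid M] (μ : YoungDiagram) (n : ℕ)
    (hn : μ.rowLen 0 ≤ n) (f : ℕ × ℕ → M) :
    ∑ c ∈ μ.cells, f c = ∑ j ∈ range n, ∑ i ∈ range (μ.colLen j), f (i, j) := by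
  classical
  have hset : μ.cells = (range n).biUnion
      (fun j => (range (μ.colLen j)).image (fun i => (i, j))) := by
    ext ⟨a, b⟩
    simp only [mem_biUnion, mem_range, mem_image, YoungDiagram.mem_cells, Prod.mk.injEq]
    constructor
    · intro hab
      have hb : b < μ.rowLen 0 := by
        rw [← YoungDiagram.mem_iff_lt_rowLen]
        exact μ.up_left_mem (Nat.zero_le _) le_rfl hab
      exact ⟨b, by omega, a, YoungDiagram.mem_iff_lt_colLen.mp hab, rfl, rfl⟩
    · rintro ⟨j, _, i, hi, rfl, rfl⟩
      exact YoungDiagram.mem_iff_lt_colLen.mpr hi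
  rw [hset, Finset.sum_biUnion]
  · refine Finset.sum_congr rfl fun j _ => ?_
    rw [Finset.sum_image (by intro x _ y _ h; simpa using h)]
  · intro x _ y _ hxy
    simp only [Function.onFun]
    rw [Finset.disjoint_left]
    rintro ⟨a, b⟩ ha hb
    simp only [mem_image, mem_range, Prod.mk.injEq] at ha hb
    obtain ⟨_, _, _, h1⟩ := ha
    obtain ⟨_, _, _, h2⟩ := hb
    exact hxy (h1 ▸ h2 ▸ rfl)

lemma armLen_zero_row (μ : YoungDiagram) (j : ℕ) :
    armLen μ (0, j) = μ.rowLen 0 - j - 1 := by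
  unfold armLen
  have hset : μ.cells.filter (fun d => d.1 = 0 ∧ j < d.2) =
      (Finset.Ico (j + 1) (μ.rowLen 0)).image (fun t => ((0 : ℕ), t)) := by
    ext ⟨a, b⟩
    simp only [mem_filter, mem_image, mem_Ico, YoungDiagram.mem_cells, Prod.mk.injEq]
    constructor
    · rintro ⟨hab, rfl, hj⟩
      exact ⟨b, ⟨by omega, YoungDiagram.mem_iff_lt_rowLen.mp hab⟩, rfl, rfl⟩
    · rintro ⟨t, ⟨h1, h2⟩, rfl, rfl⟩
      exact ⟨YoungDiagram.mem_iff_lt_rowLen.mpr h2, rfl, by omega⟩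
  rw [hset, Finset.card_image_of_injective _ (by intro x y h; simpa using h), Nat.card_Ico]
  omega

lemma shift_filter_card (μ : YoungDiagram) (p : ℕ × ℕ → Prop) [DecidablePred p]
    (hp : ∀ d, p d → 1 ≤ d.1) :
    (μ.cells.filter p).card = ((tailYD μ).cells.filter (fun d => p (d.1 + 1, d.2))).card := by
  classical
  refine Finset.card_nbij' (fun d => (d.1 - 1, d.2)) (fun d => (d.1 + 1, d.2)) ?_ ?_ ?_ ?_
  · rintro ⟨a, b⟩ hd
    simp only [Finset.mem_coe, mem_filter, YoungDiagram.mem_cells] at hd ⊢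
    obtain ⟨hab, hpd⟩ := hd
    have h1 : 1 ≤ a := hp _ hpd
    constructor
    · rw [mem_tailYD]
      have : a - 1 + 1 = a := by omega
      rwa [this]
    · have : a - 1 + 1 = a := by omega
      simpa [this] using hpd
  · rintro ⟨a, b⟩ hd
    simp only [Finset.mem_coe, mem_filter, YoungDiagram.mem_cells] at hd ⊢
    exact ⟨mem_tailYD.mp hd.1, hd.2⟩
  · rintro ⟨a, b⟩ hd
    simp only [Finset.mem_coe, mem_filter, YoungDiagram.mem_cells] at hd
    have h1 : 1 ≤ a := hp _ hd.2
    rw [Prod.ext_iff]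
    refine ⟨by simp; omega, rfl⟩
  · rintro ⟨a, b⟩ _
    simp

lemma armLen_succ (μ : YoungDiagram) (i j : ℕ) :
    armLen μ (i + 1, j) = armLen (tailYD μ) (i, j) := by
  unfold armLen
  rw [shift_filter_card μ (fun d => d.1 = (i + 1, j).1 ∧ (i + 1, j).2 < d.2)
    (by rintro ⟨a, b⟩ ⟨h1, _⟩; simp at h1 ⊢; omega)]
  congr 1
  apply Finset.filter_congr
  rintro ⟨a, b⟩ _
  simp only [eq_iff_iff]
  constructor
  · rintro ⟨h1, h2⟩; exact ⟨by omega, h2⟩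
  · rintro ⟨h1, h2⟩; exact ⟨by omega, h2⟩

lemma legLen_succ (μ : YoungDiagram) (i j : ℕ) :
    legLen μ (i + 1, j) = legLen (tailYD μ) (i, j) := by
  unfold legLen
  rw [shift_filter_card μ (fun d => d.2 = (i + 1, j).2 ∧ (i + 1, j).1 < d.1)
    (by rintro ⟨a, b⟩ ⟨_, h2⟩; simp at h2 ⊢; omega)]
  congr 1
  apply Finset.filter_congr
  rintro ⟨a, b⟩ _
  simp only [eq_iff_iff]
  constructor
  · rintro ⟨h1, h2⟩; exact ⟨h1, by omega⟩
  · rintro ⟨h1, h2⟩; exact ⟨h1, by omega⟩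

lemma legLen_zero (μ : YoungDiagram) (j : ℕ) :
    legLen μ (0, j) = (tailYD μ).colLen j := by
  unfold legLen
  rw [shift_filter_card μ (fun d => d.2 = ((0 : ℕ), j).2 ∧ ((0 : ℕ), j).1 < d.1)
    (by rintro ⟨a, b⟩ ⟨_, h2⟩; simp at h2 ⊢; omega)]
  rw [YoungDiagram.colLen_eq_card, YoungDiagram.col]
  congr 1
  apply Finset.filter_congr
  rintro ⟨a, b⟩ _
  simp

/-! ### The arm–leg identity -/

def Hsum (μ : YoungDiagram) (u v : ℤ × ℤ) : LaurentZ :=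
  ∑ c ∈ μ.cells, (Xm ((-(legLen μ c : ℤ) - 1) • u + (armLen μ c : ℤ) • v)
    + Xm ((legLen μ c : ℤ) • u + (-(armLen μ c : ℤ) - 1) • v))

def RowR (n : ℕ) (v : ℤ × ℤ) : LaurentZ := ∑ j ∈ Finset.range n, Xm ((j : ℤ) • v)

lemma Q_decomp (μ : YoungDiagram) (u v : ℤ × ℤ) :
    QmuAt μ u v = RowR (μ.rowLen 0) v + Xm u * QmuAt (tailYD μ) u v := by
  unfold QmuAt RowR
  rw [sum_cells_decomp μ (fun c => Xm ((c.1 : ℤ) • u + (c.2 : ℤ) • v))]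
  congr 1
  · apply Finset.sum_congr rfl
    intro j _
    norm_num
  · rw [Finset.mul_sum]
    apply Finset.sum_congr rfl
    intro c _
    rw [← Xm_add]
    congr 1
    push_cast
    module

lemma geoR (n : ℕ) (v : ℤ × ℤ) : (1 - Xm v) * RowR n v = 1 - Xm ((n : ℤ) • v) := by
  unfold RowR
  rw [Xm_nsmul]
  have h := geom_sum_mul (Xm v) n
  have h2 : ∀ j ∈ Finset.range n, Xm ((j : ℤ) • v) = Xm v ^ j := fun j _ => Xm_nsmul j v
  rw [Finset.sum_congr rfl h2]
  linear_combination -h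

lemma RbarR (n : ℕ) (v : ℤ × ℤ) :
    RowR n v = Xm ((n : ℤ) • v) * Xm (-v) * RowR n (-v) := by
  unfold RowR
  rw [Finset.mul_sum, ← Finset.sum_range_reflect (fun j => Xm ((j : ℤ) • v)) n]
  apply Finset.sum_congr rfl
  intro j hj
  rw [Finset.mem_range] at hj
  rw [← Xm_add, ← Xm_add]
  congr 1
  have : ((n - 1 - j : ℕ) : ℤ) = (n : ℤ) - 1 - j := by omega
  rw [this]
  module

lemma colsum (μ : YoungDiagram) (n : ℕ) (hn : μ.rowLen 0 ≤ n) (u v : ℤ × ℤ) :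
    ∑ j ∈ Finset.range n, Xm ((μ.colLen j : ℤ) • u + (j : ℤ) • v)
      = RowR n v - (1 - Xm u) * QmuAt μ u v := by
  unfold QmuAt
  rw [sum_cells_cols μ n hn (fun c => Xm ((c.1 : ℤ) • u + (c.2 : ℤ) • v))]
  unfold RowR
  rw [Finset.mul_sum, ← Finset.sum_sub_distrib]
  apply Finset.sum_congr rfl
  intro j _
  have hXm : ∀ i : ℕ, Xm ((i : ℤ) • u + (j : ℤ) • v) = Xm u ^ i * Xm ((j : ℤ) • v) := by
    intro i
    rw [Xm_add, Xm_nsmul]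
  rw [hXm]
  have : ∑ i ∈ Finset.range (μ.colLen j), Xm ((i : ℤ) • u + (j : ℤ) • v)
      = (∑ i ∈ Finset.range (μ.colLen j), Xm u ^ i) * Xm ((j : ℤ) • v) := by
    rw [Finset.sum_mul]
    exact Finset.sum_congr rfl fun i _ => hXm i
  rw [this]
  have hg : (1 - Xm u) * ∑ i ∈ Finset.range (μ.colLen j), Xm u ^ i
      = 1 - Xm u ^ (μ.colLen j) := by
    have := geom_sum_mul (Xm u) (μ.colLen j)
    linear_combination -this
  calc Xm u ^ μ.colLen j * Xm ((j : ℤ) • v)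
      = Xm ((j : ℤ) • v) - (1 - Xm u ^ μ.colLen j) * Xm ((j : ℤ) • v) := by ring
    _ = Xm ((j : ℤ) • v) -
        (1 - Xm u) * ((∑ i ∈ Finset.range (μ.colLen j), Xm u ^ i) * Xm ((j : ℤ) • v)) := by
        rw [← hg]; ring

lemma H_decomp (μ : YoungDiagram) (u v : ℤ × ℤ) :
    Hsum μ u v =
      (∑ j ∈ Finset.range (μ.rowLen 0),
        (Xm ((-((tailYD μ).colLen j : ℤ) - 1) • u + ((μ.rowLen 0 : ℤ) - 1 - j) • v)
          + Xm (((tailYD μ).colLen j : ℤ) • u + (-(μ.rowLen 0 : ℤ) + j) • v)))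
      + Hsum (tailYD μ) u v := by
  unfold Hsum
  have hdec := sum_cells_decomp μ (fun c =>
    Xm ((-(legLen μ c : ℤ) - 1) • u + (armLen μ c : ℤ) • v)
    + Xm ((legLen μ c : ℤ) • u + (-(armLen μ c : ℤ) - 1) • v))
  rw [hdec]
  have e1 : ∀ j ∈ Finset.range (μ.rowLen 0),
      Xm ((-(legLen μ (0, j) : ℤ) - 1) • u + (armLen μ (0, j) : ℤ) • v)
        + Xm ((legLen μ (0, j) : ℤ) • u + (-(armLen μ (0, j) : ℤ) - 1) • v)
      = Xm ((-((tailYD μ).colLen j : ℤ) - 1) • u + ((μ.rowLen 0 : ℤ) - 1 - j) • v)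
          + Xm (((tailYD μ).colLen j : ℤ) • u + (-(μ.rowLen 0 : ℤ) + j) • v) := by
    intro j hj
    rw [Finset.mem_range] at hj
    rw [armLen_zero_row, legLen_zero]
    have h1 : ((μ.rowLen 0 - j - 1 : ℕ) : ℤ) = (μ.rowLen 0 : ℤ) - 1 - j := by omega
    rw [h1]
    have h3 : (-((μ.rowLen 0 : ℤ) - 1 - j) - 1) = -(μ.rowLen 0 : ℤ) + j := by omega
    rw [h3]
  have e2 : ∀ c ∈ (tailYD μ).cells,
      Xm ((-(legLen μ (c.1 + 1, c.2) : ℤ) - 1) • u + (armLen μ (c.1 + 1, c.2) : ℤ) • v)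
        + Xm ((legLen μ (c.1 + 1, c.2) : ℤ) • u + (-(armLen μ (c.1 + 1, c.2) : ℤ) - 1) • v)
      = Xm ((-(legLen (tailYD μ) c : ℤ) - 1) • u + (armLen (tailYD μ) c : ℤ) • v)
        + Xm ((legLen (tailYD μ) c : ℤ) • u + (-(armLen (tailYD μ) c : ℤ) - 1) • v) := by
    intro c _
    rw [armLen_succ, legLen_succ]
  rw [Finset.sum_congr rfl e1, Finset.sum_congr rfl e2]

theorem armLeg (μ : YoungDiagram) (u v : ℤ × ℤ) : FmuAt μ u v = - Hsum μ u v := by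
  generalize hN : μ.cells.card = N
  induction N using Nat.strong_induction_on generalizing μ with
  | _ N IH =>
  by_cases hbot : μ = ⊥
  · subst hbot
    have hQ : QmuAt ⊥ u v = 0 := by simp [QmuAt]
    have hQ' : QmuAt ⊥ (-u) (-v) = 0 := by simp [QmuAt]
    have hH : Hsum ⊥ u v = 0 := by simp [Hsum]
    rw [FmuAt, hQ, hQ', hH]
    ring
  · have hindF : FmuAt (tailYD μ) u v = - Hsum (tailYD μ) u v :=
      IH _ (hN ▸ tailYD_card_lt hbot) (tailYD μ) rfl
    apply iota_inj
    have h1 : ι (Xm u) * ι (Xm (-u)) = 1 := by rw [← map_mul, Xm_mul_neg, map_one]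
    have h2 : ι (Xm v) * ι (Xm (-v)) = 1 := by rw [← map_mul, Xm_mul_neg, map_one]
    have hz : ι (Xm ((μ.rowLen 0 : ℤ) • v)) * ι (Xm ((-(μ.rowLen 0 : ℤ)) • v)) = 1 := by
      rw [← map_mul, ← Xm_add]
      have he : (μ.rowLen 0 : ℤ) • v + (-(μ.rowLen 0 : ℤ)) • v = 0 := by module
      rw [he, Xm_zero, map_one]
    have hgeo : (1 - ι (Xm v)) * ι (RowR (μ.rowLen 0) v)
        = 1 - ι (Xm ((μ.rowLen 0 : ℤ) • v)) := by
      have := congrArg ι (geoR (μ.rowLen 0) v)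
      simpa only [map_mul, map_sub, map_one] using this
    have hRR : ι (RowR (μ.rowLen 0) v)
        = ι (Xm ((μ.rowLen 0 : ℤ) • v)) * ι (Xm (-v)) * ι (RowR (μ.rowLen 0) (-v)) := by
      have := congrArg ι (RbarR (μ.rowLen 0) v)
      simpa only [map_mul] using this
    have huv : ι (Xm (-u - v)) = ι (Xm (-u)) * ι (Xm (-v)) := by
      have he : -u - v = (-u) + (-v) := by module
      rw [he, Xm_add, map_mul]
    have eQ : ι (QmuAt μ u v)
        = ι (RowR (μ.rowLen 0) v) + ι (Xm u) * ι (QmuAt (tailYD μ) u v) := by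
      rw [Q_decomp μ u v, map_add, map_mul]
    have eQ' : ι (QmuAt μ (-u) (-v))
        = ι (RowR (μ.rowLen 0) (-v)) + ι (Xm (-u)) * ι (QmuAt (tailYD μ) (-u) (-v)) := by
      rw [Q_decomp μ (-u) (-v), map_add, map_mul]
    have eF : ι (FmuAt μ u v)
        = -(ι (RowR (μ.rowLen 0) v) + ι (Xm u) * ι (QmuAt (tailYD μ) u v))
          - ι (Xm (-u)) * ι (Xm (-v)) *
            (ι (RowR (μ.rowLen 0) (-v)) + ι (Xm (-u)) * ι (QmuAt (tailYD μ) (-u) (-v)))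
          + (ι (RowR (μ.rowLen 0) v) + ι (Xm u) * ι (QmuAt (tailYD μ) u v)) *
            (ι (RowR (μ.rowLen 0) (-v)) + ι (Xm (-u)) * ι (QmuAt (tailYD μ) (-u) (-v))) *
            ((1 - ι (Xm u)) * (1 - ι (Xm v)) * (ι (Xm (-u)) * ι (Xm (-v)))) := by
      rw [FmuAt]
      simp only [map_add, map_sub, map_neg, map_mul, map_one]
      rw [eQ, eQ', huv]
    have er1 : ι (∑ j ∈ Finset.range (μ.rowLen 0),
          Xm ((-((tailYD μ).colLen j : ℤ) - 1) • u + ((μ.rowLen 0 : ℤ) - 1 - j) • v))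
        = ι (Xm (-u)) * ι (Xm ((μ.rowLen 0 : ℤ) • v)) * ι (Xm (-v)) *
            (ι (RowR (μ.rowLen 0) (-v))
              - (1 - ι (Xm (-u))) * ι (QmuAt (tailYD μ) (-u) (-v))) := by
      have hsum : (∑ j ∈ Finset.range (μ.rowLen 0),
            Xm ((-((tailYD μ).colLen j : ℤ) - 1) • u + ((μ.rowLen 0 : ℤ) - 1 - j) • v))
          = Xm (-u) * Xm ((μ.rowLen 0 : ℤ) • v) * Xm (-v) *
              ∑ j ∈ Finset.range (μ.rowLen 0),
                Xm (((tailYD μ).colLen j : ℤ) • (-u) + (j : ℤ) • (-v)) := by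
        rw [Finset.mul_sum]
        apply Finset.sum_congr rfl
        intro j _
        rw [← Xm_add, ← Xm_add, ← Xm_add]
        congr 1
        module
      rw [hsum, colsum (tailYD μ) (μ.rowLen 0) (rowLen_tailYD_le μ) (-u) (-v)]
      simp only [map_mul, map_sub, map_one]
    have er2 : ι (∑ j ∈ Finset.range (μ.rowLen 0),
          Xm (((tailYD μ).colLen j : ℤ) • u + (-(μ.rowLen 0 : ℤ) + j) • v))
        = ι (Xm ((-(μ.rowLen 0 : ℤ)) • v)) *
            (ι (RowR (μ.rowLen 0) v) - (1 - ι (Xm u)) * ι (QmuAt (tailYD μ) u v)) := by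
      have hsum : (∑ j ∈ Finset.range (μ.rowLen 0),
            Xm (((tailYD μ).colLen j : ℤ) • u + (-(μ.rowLen 0 : ℤ) + j) • v))
          = Xm ((-(μ.rowLen 0 : ℤ)) • v) *
              ∑ j ∈ Finset.range (μ.rowLen 0),
                Xm (((tailYD μ).colLen j : ℤ) • u + (j : ℤ) • v) := by
        rw [Finset.mul_sum]
        apply Finset.sum_congr rfl
        intro j _
        rw [← Xm_add]
        congr 1
        module
      rw [hsum, colsum (tailYD μ) (μ.rowLen 0) (rowLen_tailYD_le μ) u v]
      simp only [map_mul, map_sub, map_one]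
    have eHν : ι (Hsum (tailYD μ) u v)
        = ι (QmuAt (tailYD μ) u v)
          + ι (Xm (-u)) * ι (Xm (-v)) * ι (QmuAt (tailYD μ) (-u) (-v))
          - ι (QmuAt (tailYD μ) u v) * ι (QmuAt (tailYD μ) (-u) (-v)) *
            ((1 - ι (Xm u)) * (1 - ι (Xm v)) * (ι (Xm (-u)) * ι (Xm (-v)))) := by
      have hHν : Hsum (tailYD μ) u v = - FmuAt (tailYD μ) u v := by
        rw [hindF, neg_neg]
      rw [hHν, FmuAt]
      simp only [map_add, map_sub, map_neg, map_mul, map_one]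
      rw [huv]
      ring
    have eH : ι (Hsum μ u v)
        = (ι (Xm (-u)) * ι (Xm ((μ.rowLen 0 : ℤ) • v)) * ι (Xm (-v)) *
            (ι (RowR (μ.rowLen 0) (-v))
              - (1 - ι (Xm (-u))) * ι (QmuAt (tailYD μ) (-u) (-v)))
          + ι (Xm ((-(μ.rowLen 0 : ℤ)) • v)) *
            (ι (RowR (μ.rowLen 0) v) - (1 - ι (Xm u)) * ι (QmuAt (tailYD μ) u v)))
          + ι (Hsum (tailYD μ) u v) := by
      rw [H_decomp μ u v, map_add, Finset.sum_add_distrib, map_add, er1, er2]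
    rw [map_neg, eF, eH, eHν]
    linear_combination step_core (ι (Xm u)) (ι (Xm (-u))) (ι (Xm v)) (ι (Xm (-v)))
      (ι (Xm ((μ.rowLen 0 : ℤ) • v))) (ι (Xm ((-(μ.rowLen 0 : ℤ)) • v)))
      (ι (RowR (μ.rowLen 0) v)) (ι (RowR (μ.rowLen 0) (-v)))
      (ι (QmuAt (tailYD μ) u v)) (ι (QmuAt (tailYD μ) (-u) (-v)))
      h1 h2 hz hgeo hRR

/-! ### The key identity for the edge term -/

def P0 (μ : YoungDiagram) : LaurentZ :=
  ∑ c ∈ μ.cells,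
    ((∑ k ∈ Finset.range (legLen μ c + 1),
        Xm ((legLen μ c : ℤ) - k, -((armLen μ c : ℤ) + 1) - k))
     - ∑ k ∈ Finset.range (legLen μ c),
        Xm (-(1 + (k : ℤ)), (armLen μ c : ℤ) + (legLen μ c : ℤ) - k))

lemma cellkey (a l : ℕ) :
    (Xm (-1, -1) - 1) * ((∑ k ∈ Finset.range (l + 1), Xm ((l : ℤ) - k, -((a : ℤ) + 1) - k))
        - ∑ k ∈ Finset.range l, Xm (-(1 + (k : ℤ)), (a : ℤ) + (l : ℤ) - k))
    = -(Xm (-(l : ℤ) - 1, (a : ℤ)) + Xm ((l : ℤ), -(a : ℤ) - 1))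
      + Xm (-1, -1) * (Xm (0, (a : ℤ) + (l : ℤ) + 1) + Xm (0, -(a : ℤ) - (l : ℤ) - 1)) := by
  have e1 : ∀ k ∈ Finset.range (l + 1),
      Xm ((l : ℤ) - k, -((a : ℤ) + 1) - k) = Xm (-1, -1) ^ k * Xm ((l : ℤ), -(a : ℤ) - 1) := by
    intro k _
    rw [← Xm_nsmul, ← Xm_add]
    congr 1
    rw [Prod.ext_iff]
    constructor <;> simp <;> ring
  have e2 : ∀ k ∈ Finset.range l,
      Xm (-(1 + (k : ℤ)), (a : ℤ) + (l : ℤ) - k)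
        = Xm (-1, -1) ^ k * Xm (-1, (a : ℤ) + (l : ℤ)) := by
    intro k _
    rw [← Xm_nsmul, ← Xm_add]
    congr 1
    rw [Prod.ext_iff]
    constructor <;> simp <;> ring
  rw [Finset.sum_congr rfl e1, Finset.sum_congr rfl e2, ← Finset.sum_mul, ← Finset.sum_mul]
  have g1 := geom_sum_mul (Xm (-1, -1)) (l + 1)
  have g2 := geom_sum_mul (Xm (-1, -1)) l
  have p1 : Xm (-1, -1) ^ (l + 1) * Xm ((l : ℤ), -(a : ℤ) - 1)
      = Xm (-1, -(a : ℤ) - (l : ℤ) - 2) := by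
    rw [← Xm_nsmul, ← Xm_add]
    congr 1
    rw [Prod.ext_iff]
    constructor <;> simp <;> push_cast <;> ring
  have p2 : Xm (-1, -1) ^ l * Xm (-1, (a : ℤ) + (l : ℤ)) = Xm (-(l : ℤ) - 1, (a : ℤ)) := by
    rw [← Xm_nsmul, ← Xm_add]
    congr 1
    rw [Prod.ext_iff]
    constructor <;> simp <;> ring
  have p3 : Xm (-1, -1) * Xm (0, (a : ℤ) + (l : ℤ) + 1) = Xm (-1, (a : ℤ) + (l : ℤ)) := by
    rw [← Xm_add]
    congr 1
    rw [Prod.ext_iff]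
    constructor <;> simp <;> ring
  have p4 : Xm (-1, -1) * Xm (0, -(a : ℤ) - (l : ℤ) - 1) = Xm (-1, -(a : ℤ) - (l : ℤ) - 2) := by
    rw [← Xm_add]
    congr 1
    rw [Prod.ext_iff]
    constructor <;> simp <;> ring
  linear_combination Xm ((l : ℤ), -(a : ℤ) - 1) * g1 - Xm (-1, (a : ℤ) + (l : ℤ)) * g2
    + p1 - p2 - p3 - p4

lemma smul_e1 (x y : ℤ) :
    x • (((1 : ℤ), (0 : ℤ)) : ℤ × ℤ) + y • (((0 : ℤ), (1 : ℤ)) : ℤ × ℤ) = (x, y) := by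
  rw [Prod.ext_iff]
  constructor <;> simp

lemma key (μ : YoungDiagram) :
    (Xm (-1, -1) - 1) * P0 μ
      = FmuAt μ (1, 0) (0, 1) - Xm (-1, -1) * FmuAt μ (0, -1) (0, 1) := by
  rw [armLeg μ (1, 0) (0, 1), armLeg μ (0, -1) (0, 1)]
  unfold Hsum P0
  rw [Finset.mul_sum]
  simp only [mul_neg, sub_neg_eq_add]
  rw [Finset.mul_sum, ← Finset.sum_neg_distrib, ← Finset.sum_add_distrib]
  apply Finset.sum_congr rfl
  intro c _
  have E1 : (-(legLen μ c : ℤ) - 1) • (((1 : ℤ), (0 : ℤ)) : ℤ × ℤ)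
      + (armLen μ c : ℤ) • (((0 : ℤ), (1 : ℤ)) : ℤ × ℤ)
      = (-(legLen μ c : ℤ) - 1, (armLen μ c : ℤ)) := smul_e1 _ _
  have E2 : (legLen μ c : ℤ) • (((1 : ℤ), (0 : ℤ)) : ℤ × ℤ)
      + (-(armLen μ c : ℤ) - 1) • (((0 : ℤ), (1 : ℤ)) : ℤ × ℤ)
      = ((legLen μ c : ℤ), -(armLen μ c : ℤ) - 1) := smul_e1 _ _
  have E3 : (-(legLen μ c : ℤ) - 1) • (((0 : ℤ), (-1 : ℤ)) : ℤ × ℤ)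
      + (armLen μ c : ℤ) • (((0 : ℤ), (1 : ℤ)) : ℤ × ℤ)
      = ((0 : ℤ), (armLen μ c : ℤ) + (legLen μ c : ℤ) + 1) := by
    rw [Prod.ext_iff]
    constructor <;> simp <;> ring
  have E4 : (legLen μ c : ℤ) • (((0 : ℤ), (-1 : ℤ)) : ℤ × ℤ)
      + (-(armLen μ c : ℤ) - 1) • (((0 : ℤ), (1 : ℤ)) : ℤ × ℤ)
      = ((0 : ℤ), -(armLen μ c : ℤ) - (legLen μ c : ℤ) - 1) := by
    rw [Prod.ext_iff]
    constructor <;> simp <;> ring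
  rw [E1, E2, E3, E4]
  have := cellkey (armLen μ c) (legLen μ c)
  linear_combination this

lemma Xm_m11_sub_one_ne : ι (Xm (-1, -1)) - 1 ≠ 0 := by
  intro h
  have h2 : Xm ((-1 : ℤ), (-1 : ℤ)) = 1 := by
    apply iota_inj
    rw [map_one]
    exact sub_eq_zero.mp h
  have h4 : (Xm ((-1 : ℤ), (-1 : ℤ))).coeff ((-1, -1) : ℤ × ℤ)
      = (1 : LaurentZ).coeff ((-1, -1) : ℤ × ℤ) := by rw [h2]
  simp [Xm, AddMonoidAlgebra.one_def, AddMonoidAlgebra.coeff_single, Finsupp.single_apply, Prod.ext_iff] at h4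

lemma P0_spec (μ : YoungDiagram) : ι (P0 μ) = Espec μ := by
  unfold Espec
  have hnum : ι (FmuAt μ (1, 0) (0, 1)) - ι (Xm (-1, -1)) * ι (FmuAt μ (0, -1) (0, 1))
      = (ι (Xm (-1, -1)) - 1) * ι (P0 μ) := by
    rw [← map_mul, ← map_sub, ← key μ, map_mul, map_sub, map_one]
  rw [hnum, mul_comm, mul_div_assoc, div_self Xm_m11_sub_one_ne, mul_one]

/-! ### Evaluation in ℚ(s,t) -/

lemma T_ne_zero : T ≠ 0 := by
  unfold T
  intro h
  have h2 : (MvPolynomial.X 1 : MvPolynomial (Fin 2) ℚ) = 0 :=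
    IsFractionRing.injective (MvPolynomial (Fin 2) ℚ) KST (by rw [h, map_zero])
  exact MvPolynomial.X_ne_zero 1 h2

lemma lf_eq (m : ℤ × ℤ) : lf m = algebraMap (MvPolynomial (Fin 2) ℚ) KST
    (-(m.1 : MvPolynomial (Fin 2) ℚ) * (MvPolynomial.X 0 + MvPolynomial.X 1)
      + (m.2 : MvPolynomial (Fin 2) ℚ) * MvPolynomial.X 1) := by
  unfold lf S T
  simp only [map_add, map_mul, map_neg, map_intCast]

lemma lf_ne_zero {m : ℤ × ℤ} (hm : m ≠ 0) : lf m ≠ 0 := by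
  rw [lf_eq]
  intro h
  have h0 : (-(m.1 : MvPolynomial (Fin 2) ℚ) * (MvPolynomial.X 0 + MvPolynomial.X 1)
      + (m.2 : MvPolynomial (Fin 2) ℚ) * MvPolynomial.X 1) = 0 :=
    IsFractionRing.injective (MvPolynomial (Fin 2) ℚ) KST (by rw [h, map_zero])
  have e1 := congrArg (MvPolynomial.eval (fun i : Fin 2 => if i = 0 then (1 : ℚ) else 0)) h0
  have e2 := congrArg (MvPolynomial.eval (fun i : Fin 2 => if i = 1 then (1 : ℚ) else 0)) h0
  simp only [map_add, map_mul, map_neg, map_intCast, MvPolynomial.eval_X, map_zero] at e1 e2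
  norm_num at e1 e2
  apply hm
  have hm1 : m.1 = 0 := by exact_mod_cast e1
  have hm2 : m.2 = 0 := by
    rw [hm1] at e2
    norm_num at e2
    exact_mod_cast e2
  exact Prod.ext hm1 hm2

def lfs (m : ℤ × ℤ) : KST := if m = 0 then 1 else lf m

lemma lfs_ne_zero (m : ℤ × ℤ) : lfs m ≠ 0 := by
  unfold lfs
  split
  · exact one_ne_zero
  · exact lf_ne_zero (by assumption)

def Phi (p : LaurentZ) : KST := p.coeff.prod fun m c => lfs m ^ (-c)

lemma Phi_single (m : ℤ × ℤ) (k : ℤ) : Phi (AddMonoidAlgebra.single m k) = lfs m ^ (-k) :=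
  Finsupp.prod_single_index (by simp)

lemma Phi_add (p q : LaurentZ) : Phi (p + q) = Phi p * Phi q :=
  Finsupp.prod_add_index' (fun m => by simp)
    (fun m b c => by rw [neg_add, zpow_add₀ (lfs_ne_zero m)])

lemma Phi_sum {α : Type*} (s : Finset α) (g : α → LaurentZ) :
    Phi (∑ i ∈ s, g i) = ∏ i ∈ s, Phi (g i) := by
  classical
  induction s using Finset.cons_induction with
  | empty => simp [Phi]
  | cons a s ha ih => rw [Finset.sum_cons, Finset.prod_cons, Phi_add, ih]

lemma Phi_ne_zero (p : LaurentZ) : Phi p ≠ 0 := by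
  unfold Phi Finsupp.prod
  apply Finset.prod_ne_zero_iff.mpr
  intro m _
  exact zpow_ne_zero _ (lfs_ne_zero m)

lemma Phi_sub (p q : LaurentZ) : Phi (p - q) = Phi p / Phi q := by
  have h := Phi_add (p - q) q
  rw [sub_add_cancel] at h
  rw [eq_div_iff (Phi_ne_zero q), ← h]

lemma lf_pair1 (a l : ℕ) (k : ℕ) (hk : k ≤ l) :
    lf ((l : ℤ) - k, -((a : ℤ) + 1) - k)
      = -((((l - k : ℕ) : KST)) * S + ((a + l + 1 : ℕ) : KST) * T) := by
  unfold lf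
  have hc : ((l - k : ℕ) : KST) = ((l : ℕ) : KST) - ((k : ℕ) : KST) := by
    have : ((l - k : ℕ) : ℚ) = (l : ℚ) - (k : ℚ) := by
      push_cast [Nat.cast_sub hk]; ring
    push_cast [Nat.cast_sub hk]
    ring
  rw [hc]
  push_cast
  ring

lemma lf_pair2 (a l : ℕ) (k : ℕ) :
    lf (-(1 + (k : ℤ)), (a : ℤ) + (l : ℤ) - k)
      = (((k + 1 : ℕ) : KST)) * S + ((a + l + 1 : ℕ) : KST) * T := by
  unfold lf
  push_cast
  ring

lemma cellProd (a l : ℕ) :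
    (∏ k ∈ Finset.range (l + 1), (lf ((l : ℤ) - k, -((a : ℤ) + 1) - k))⁻¹) *
      (∏ k ∈ Finset.range l, lf (-(1 + (k : ℤ)), (a : ℤ) + (l : ℤ) - k))
    = (-1) ^ (l + 1) * (((a + l + 1 : ℕ) : KST) * T)⁻¹ := by
  have hTne : ((a + l + 1 : ℕ) : KST) * T ≠ 0 :=
    mul_ne_zero (Nat.cast_ne_zero.mpr (by omega)) T_ne_zero
  have e1 : ∀ k ∈ Finset.range (l + 1), (lf ((l : ℤ) - k, -((a : ℤ) + 1) - k))⁻¹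
      = (fun j : ℕ => (-((((j : ℕ) : KST)) * S + ((a + l + 1 : ℕ) : KST) * T))⁻¹) (l + 1 - 1 - k) := by
    intro k hk
    rw [Finset.mem_range] at hk
    rw [lf_pair1 a l k (by omega)]
    simp only
    have h9 : l + 1 - 1 - k = l - k := by omega
    rw [h9]
  rw [Finset.prod_congr rfl e1, Finset.prod_range_reflect
    (fun j : ℕ => (-((((j : ℕ) : KST)) * S + ((a + l + 1 : ℕ) : KST) * T))⁻¹) (l + 1)]
  rw [Finset.prod_range_succ'
    (fun j : ℕ => (-((((j : ℕ) : KST)) * S + ((a + l + 1 : ℕ) : KST) * T))⁻¹) l]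
  have e2 : ∀ k ∈ Finset.range l, lf (-(1 + (k : ℤ)), (a : ℤ) + (l : ℤ) - k)
      = (((k + 1 : ℕ) : KST)) * S + ((a + l + 1 : ℕ) : KST) * T := fun k _ => lf_pair2 a l k
  rw [Finset.prod_congr rfl e2]
  simp only [Nat.cast_zero, zero_mul, zero_add]
  have hcombine : ∀ k ∈ Finset.range l,
      (-((((k + 1 : ℕ) : KST)) * S + ((a + l + 1 : ℕ) : KST) * T))⁻¹ *
        ((((k + 1 : ℕ) : KST)) * S + ((a + l + 1 : ℕ) : KST) * T) = -1 := by
    intro k _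
    have hx : (((k + 1 : ℕ) : KST)) * S + ((a + l + 1 : ℕ) : KST) * T ≠ 0 := by
      rw [← lf_pair2 a l k]
      apply lf_ne_zero
      intro hme
      rw [Prod.ext_iff] at hme
      have := hme.1
      simp at this
      omega
    rw [inv_neg, neg_mul, inv_mul_cancel₀ hx]
  have hmain : (∏ k ∈ Finset.range l,
        (-((((k + 1 : ℕ) : KST)) * S + ((a + l + 1 : ℕ) : KST) * T))⁻¹) *
      (∏ k ∈ Finset.range l, ((((k + 1 : ℕ) : KST)) * S + ((a + l + 1 : ℕ) : KST) * T))
      = (-1 : KST) ^ l := by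
    rw [← Finset.prod_mul_distrib, Finset.prod_congr rfl hcombine, Finset.prod_const,
      Finset.card_range]
  rw [mul_right_comm, hmain, inv_neg]
  ring

lemma Phi_P0 (μ : YoungDiagram) :
    Phi (P0 μ) = ∏ c ∈ μ.cells,
      ((-1 : KST) ^ (legLen μ c + 1) * (((hookLen μ c : ℕ) : KST) * T)⁻¹) := by
  unfold P0
  rw [Phi_sum]
  apply Finset.prod_congr rfl
  intro c _
  rw [Phi_sub, Phi_sum, Phi_sum]
  have hA : ∀ k ∈ Finset.range (legLen μ c + 1),
      Phi (Xm ((legLen μ c : ℤ) - k, -((armLen μ c : ℤ) + 1) - k))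
        = (lf ((legLen μ c : ℤ) - k, -((armLen μ c : ℤ) + 1) - k))⁻¹ := by
    intro k _
    rw [Xm, Phi_single, lfs, if_neg ?_, zpow_neg, zpow_one]
    intro h
    rw [Prod.ext_iff] at h
    have := h.2
    simp at this
    omega
  have hB : ∀ k ∈ Finset.range (legLen μ c),
      Phi (Xm (-(1 + (k : ℤ)), (armLen μ c : ℤ) + (legLen μ c : ℤ) - k))
        = (lf (-(1 + (k : ℤ)), (armLen μ c : ℤ) + (legLen μ c : ℤ) - k))⁻¹ := by
    intro k _
    rw [Xm, Phi_single, lfs, if_neg ?_, zpow_neg, zpow_one]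
    intro h
    rw [Prod.ext_iff] at h
    have := h.1
    simp at this
    omega
  rw [Finset.prod_congr rfl hA, Finset.prod_congr rfl hB]
  have hBB : (∏ k ∈ Finset.range (legLen μ c),
      (lf (-(1 + (k : ℤ)), (armLen μ c : ℤ) + (legLen μ c : ℤ) - k))⁻¹)⁻¹
      = ∏ k ∈ Finset.range (legLen μ c),
          lf (-(1 + (k : ℤ)), (armLen μ c : ℤ) + (legLen μ c : ℤ) - k) := by
    rw [Finset.prod_inv_distrib]
    simp only [inv_inv]
  rw [div_eq_mul_inv, hBB]
  exact cellProd (armLen μ c) (legLen μ c)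

/-- **Evaluation of the level `(−1,0)` edge weight.**  Write
`P_μ = E_μ((x1x2)⁻¹, x1, x2) = Σ_m b_m x1^{m1} x2^{m2}` as a Laurent polynomial
(so `b_{(0,0)} = 0`).  Then each linear form `−m1(s+t)+m2·t` with `m ≠ (0,0)`,
`b_m ≠ 0` is nonzero in `ℚ(s,t)`, and
`Π_{m ≠ 0} (−m1(s+t)+m2 t)^{−b_m} = (−1)^{d+n(μ)} t^{−d} Π_{□∈μ} h(□)⁻¹`. -/
theorem edge_weight_evaluation (μ : YoungDiagram) (d : ℕ) (hd : μ.cells.card = d)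
    (hd1 : 1 ≤ d) (P : LaurentZ) (hP : ι P = Espec μ) :
    P.coeff (0, 0) = 0 ∧
    (∀ m ∈ P.coeff.support, m ≠ (0, 0) → lf m ≠ 0) ∧
    ∏ m ∈ P.coeff.support.erase (0, 0), lf m ^ (-(P.coeff m)) =
      (-1 : KST) ^ (d + nOf μ) * T ^ (-(d : ℤ)) *
        ∏ c ∈ μ.cells, ((hookLen μ c : KST))⁻¹ := by
  have hPP0 : P = P0 μ := iota_inj (by rw [hP, P0_spec])
  subst hPP0
  have hc0 : (P0 μ).coeff ((0 : ℤ), (0 : ℤ)) = 0 := by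
    unfold P0
    rw [AddMonoidAlgebra.coeff_sum, Finset.sum_apply']
    apply Finset.sum_eq_zero
    intro c _
    rw [AddMonoidAlgebra.coeff_sub, Finsupp.sub_apply, AddMonoidAlgebra.coeff_sum,
      Finset.sum_apply', AddMonoidAlgebra.coeff_sum, Finset.sum_apply']
    have z1 : ∀ k ∈ Finset.range (legLen μ c + 1),
        (Xm ((legLen μ c : ℤ) - k, -((armLen μ c : ℤ) + 1) - k)).coeff ((0 : ℤ), (0 : ℤ)) = 0 := by
      intro k _
      rw [Xm]
      apply Finsupp.single_eq_of_ne
      intro h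
      rw [Prod.ext_iff] at h
      have := h.2
      simp at this
      omega
    have z2 : ∀ k ∈ Finset.range (legLen μ c),
        (Xm (-(1 + (k : ℤ)), (armLen μ c : ℤ) + (legLen μ c : ℤ) - k)).coeff ((0 : ℤ), (0 : ℤ)) = 0 := by
      intro k _
      rw [Xm]
      apply Finsupp.single_eq_of_ne
      intro h
      rw [Prod.ext_iff] at h
      have := h.1
      simp at this
      omega
    rw [Finset.sum_eq_zero z1, Finset.sum_eq_zero z2, sub_zero]
  refine ⟨hc0, fun m _ hm => lf_ne_zero hm, ?_⟩
  have h0 : ((0, 0) : ℤ × ℤ) ∉ (P0 μ).coeff.support := by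
    rw [Finsupp.mem_support_iff]
    simpa using hc0
  rw [Finset.erase_eq_of_notMem h0]
  have hprod : ∏ m ∈ (P0 μ).coeff.support, lf m ^ (-((P0 μ).coeff m)) = Phi (P0 μ) := by
    unfold Phi Finsupp.prod
    apply Finset.prod_congr rfl
    intro m hm
    have hm0 : m ≠ 0 := by
      rintro rfl
      rw [Finsupp.mem_support_iff] at hm
      exact hm hc0
    have h5 : lfs m = lf m := by
      unfold lfs
      rw [if_neg hm0]
    simp only [h5]
  rw [hprod, Phi_P0]
  rw [Finset.prod_mul_distrib, Finset.prod_pow_eq_pow_sum]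
  have hsum : ∑ c ∈ μ.cells, (legLen μ c + 1) = d + nOf μ := by
    rw [Finset.sum_add_distrib, Finset.sum_const, smul_eq_mul, mul_one, hd]
    unfold nOf
    ring
  rw [hsum]
  have hinv : ∏ c ∈ μ.cells, (((hookLen μ c : ℕ) : KST) * T)⁻¹
      = (∏ c ∈ μ.cells, ((hookLen μ c : ℕ) : KST)⁻¹) * T ^ (-(d : ℤ)) := by
    simp only [mul_inv]
    rw [Finset.prod_mul_distrib, Finset.prod_const, hd, zpow_neg, zpow_natCast, inv_pow]
  rw [hinv]
  ring


end
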